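/- arXiv:chao-dyn/9810035 — 2 statements merged into one kernel-verified Lean document; each statement's English description precedes it below -/
import Mathlib

section
/- (Davie's lemma, part 2) Let ω be an irrational number in [0,1) with continued fraction convergent denominators q_n. If ν is an integer with ‖ων‖ ≤ 1/(4q_n), then either |ν| ≥ q_{n+1}/4 or ν = s·q_n for some integer s. -/
/-- The denominator `q_n` of the `n`-th continued fraction convergent of `ω`. -/
noncomputable def cfDen (ω : ℝ) (n : ℕ) : ℝ := (GenContFract.of ω).dens n

/-- Distance from `x` to the nearest integer. -/
noncomputable def distNearestInt (x : ℝ) : ℝ := |x - round x|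

open GenContFract
open GenContFract (of)

private lemma davie_not_term (ω : ℝ) (hirr : Irrational ω) (n : ℕ) :
    ¬(of ω).TerminatedAt n := by
  intro hterm
  have hT : (of ω).Terminates := ⟨n, hterm⟩
  rw [terminates_iff_rat] at hT
  obtain ⟨q, hq⟩ := hT
  exact hirr ⟨q, hq.symm⟩

private lemma davie_contsAux_int (ω : ℝ) (hirr : Irrational ω) :
    ∀ n : ℕ, (∃ p q : ℤ, (of ω).contsAux n = ⟨(p : ℝ), (q : ℝ)⟩) ∧
      ∃ p q : ℤ, (of ω).contsAux (n + 1) = ⟨(p : ℝ), (q : ℝ)⟩ := by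
  intro n
  induction n with
  | zero =>
    constructor
    · exact ⟨1, 0, by simp [zeroth_contAux_eq_one_zero]⟩
    · exact ⟨⌊ω⌋, 1, by simp [first_contAux_eq_h_one, of_h_eq_floor]⟩
  | succ m ih =>
    refine ⟨ih.2, ?_⟩
    obtain ⟨pp, qq, hpp⟩ := ih.1
    obtain ⟨p, q, hp⟩ := ih.2
    obtain ⟨gp, s_eq⟩ : ∃ gp, (of ω).s.get? m = some gp :=
      Option.ne_none_iff_exists'.1 (davie_not_term ω hirr m)
    have ha : gp.a = 1 := of_partNum_eq_one (partNum_eq_s_a s_eq)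
    obtain ⟨z, hz⟩ : ∃ z : ℤ, gp.b = (z : ℝ) :=
      (of_partNum_eq_one_and_exists_int_partDen_eq s_eq).2
    refine ⟨z * p + pp, z * q + qq, ?_⟩
    rw [contsAux_recurrence s_eq hpp hp, ha, hz]
    refine congrArg₂ GenContFract.Pair.mk ?_ ?_ <;> push_cast <;> ring

private lemma davie_den_int (ω : ℝ) (hirr : Irrational ω) (n : ℕ) :
    ∃ p q : ℤ, (of ω).nums n = (p : ℝ) ∧ (of ω).dens n = (q : ℝ) := by
  obtain ⟨p, q, hpq⟩ := (davie_contsAux_int ω hirr n).2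
  refine ⟨p, q, ?_, ?_⟩
  · rw [num_eq_conts_a, nth_cont_eq_succ_nth_contAux, hpq]
  · rw [den_eq_conts_b, nth_cont_eq_succ_nth_contAux, hpq]

private lemma davie_one_le_den (ω : ℝ) (hirr : Irrational ω) (n : ℕ) :
    (1 : ℝ) ≤ (of ω).dens n := by
  have := succ_nth_fib_le_of_nth_den (v := ω) (n := n)
    (Or.inr (davie_not_term ω hirr (n - 1)))
  refine le_trans ?_ this
  have : 1 ≤ Nat.fib (n + 1) := Nat.fib_pos.mpr n.succ_pos
  exact_mod_cast this

theorem stmt3 (ω : ℝ) (hirr : Irrational ω) (hmem : ω ∈ Set.Ico (0 : ℝ) 1) (n : ℕ)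
    (ν : ℤ) (h : distNearestInt (ω * ν) ≤ 1 / (4 * cfDen ω n)) :
    cfDen ω (n + 1) / 4 ≤ (|ν| : ℝ) ∨ ∃ s : ℤ, (ν : ℝ) = s * cfDen ω n := by
  obtain ⟨P, Q, hP, hQ⟩ := davie_den_int ω hirr n
  obtain ⟨P', Q', hP', hQ'⟩ := davie_den_int ω hirr (n + 1)
  have hQ1 : (1 : ℝ) ≤ (Q : ℝ) := hQ ▸ davie_one_le_den ω hirr n
  have hQ'1 : (1 : ℝ) ≤ (Q' : ℝ) := hQ' ▸ davie_one_le_den ω hirr (n + 1)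
  have hQpos : (0 : ℝ) < Q := lt_of_lt_of_le one_pos hQ1
  have hQ'pos : (0 : ℝ) < Q' := lt_of_lt_of_le one_pos hQ'1
  -- approximation: |ω * Q - P| ≤ 1 / Q'
  have happrox : |ω * Q - P| ≤ 1 / Q' := by
    have h1 := abs_sub_convs_le (davie_not_term ω hirr n)
    rw [conv_eq_num_div_den, hP, hQ, hQ'] at h1
    have h2 : |ω - P / Q| * Q ≤ 1 / (Q * Q') * Q := by
      exact mul_le_mul_of_nonneg_right h1 hQpos.le
    have habs : ω * Q - P = (ω - P / Q) * Q := by field_simp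
    calc |ω * Q - P| = |ω - P / Q| * |(Q : ℝ)| := by rw [habs, abs_mul]
        _ = |ω - P / Q| * Q := by rw [abs_of_pos hQpos]
        _ ≤ 1 / (Q * Q') * Q := h2
        _ = 1 / Q' := by
            field_simp
  -- the hypothesis on ν
  set r : ℤ := round (ω * ν) with hr
  have hdist : |ω * ν - r| ≤ 1 / (4 * Q) := by
    have : cfDen ω n = (Q : ℝ) := hQ
    rwa [distNearestInt, this] at h
  -- determinant identity gives coprimality of P and Q
  have hdet : P * Q' - Q * P' = (-1) ^ (n + 1) := by
    have := SimpContFract.determinant (s := SimpContFract.of ω)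
      (n := n) (davie_not_term ω hirr n)
    have hc : ((SimpContFract.of ω : GenContFract ℝ)) = of ω := rfl
    rw [hc, hP, hQ, hP', hQ'] at this
    exact_mod_cast this
  have hcop : IsCoprime Q P := by
    refine ⟨-((-1) ^ (n + 1) * P'), (-1) ^ (n + 1) * Q', ?_⟩
    have h2 : ((-1 : ℤ) ^ (n + 1)) * ((-1) ^ (n + 1)) = 1 := by
      rw [← pow_add]
      exact (neg_one_pow_eq_one_iff_even (by norm_num)).mpr ⟨n + 1, by ring⟩
    calc -((-1 : ℤ) ^ (n + 1) * P') * Q + (-1) ^ (n + 1) * Q' * P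
        = ((-1) ^ (n + 1)) * (P * Q' - Q * P') := by ring
      _ = ((-1) ^ (n + 1)) * ((-1) ^ (n + 1)) := by rw [hdet]
      _ = 1 := h2
  by_cases hd : ν * P - r * Q = 0
  · -- then Q ∣ ν
    right
    have hdvd : Q ∣ ν * P := ⟨r, by linarith [hd]⟩
    have : Q ∣ ν := hcop.dvd_of_dvd_mul_right hdvd
    obtain ⟨s, hs⟩ := this
    refine ⟨s, ?_⟩
    rw [show cfDen ω n = (Q : ℝ) from hQ, hs]
    push_cast
    ring
  · left
    have h1 : (1 : ℝ) ≤ |(ν : ℝ) * P - r * Q| := by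
      have := Int.one_le_abs hd
      calc (1 : ℝ) ≤ |((ν * P - r * Q : ℤ) : ℝ)| := by exact_mod_cast this
        _ = |(ν : ℝ) * P - r * Q| := by push_cast; ring_nf
    have hkey : |(ν : ℝ) * P - r * Q| ≤ |(ν : ℝ)| * (1 / Q') + 1 / 4 := by
      have heq : (ν : ℝ) * P - r * Q = (ν : ℝ) * (P - ω * Q) + Q * (ω * ν - r) := by
        ring
      rw [heq]
      refine (abs_add_le _ _).trans ?_
      gcongr
      · rw [abs_mul]
        have : |(P : ℝ) - ω * Q| = |ω * Q - P| := abs_sub_comm _ _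
        rw [this]
        exact mul_le_mul_of_nonneg_left happrox (abs_nonneg _)
      · rw [abs_mul, abs_of_pos hQpos]
        calc (Q : ℝ) * |ω * ν - r| ≤ Q * (1 / (4 * Q)) := by
              exact mul_le_mul_of_nonneg_left hdist hQpos.le
          _ = 1 / 4 := by
              field_simp
    have h2 : (3 : ℝ) / 4 ≤ |(ν : ℝ)| * (1 / Q') := by linarith
    have h3 : (3 : ℝ) / 4 * Q' ≤ |(ν : ℝ)| := by
      calc (3 : ℝ) / 4 * Q' ≤ |(ν : ℝ)| * (1 / Q') * Q' :=
            mul_le_mul_of_nonneg_right h2 hQ'pos.le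
        _ = |(ν : ℝ)| := by field_simp
    have hgoal : cfDen ω (n + 1) = (Q' : ℝ) := hQ'
    rw [hgoal]
    linarith
end

section
/- Let ω be an irrational number in [0,1) with continued fraction convergent denominators q_n. Then the series ∑_{n=0}^∞ (log q_n)/q_n converges and is bounded by the absolute constant D₂ = 3(e^{-1} + log 2), uniformly in ω. -/
open Real

lemma pow_half_le_fib : ∀ n : ℕ, 2 ^ (n / 2) ≤ Nat.fib (n + 1) := by
  intro n
  induction n using Nat.twoStepInduction with
  | zero => simp
  | one => simp
  | more n ih _ =>
    have h2 : (n + 2) / 2 = n / 2 + 1 := by omega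
    rw [h2, pow_succ, Nat.fib_add_two]
    have h3 : Nat.fib (n + 1) ≤ Nat.fib (n + 1 + 1) := Nat.fib_mono (Nat.le_succ _)
    omega

lemma log_div_self_le {x : ℝ} (hx : 1 ≤ x) : Real.log x / x ≤ Real.exp (-1) := by
  have hx0 : (0:ℝ) < x := lt_of_lt_of_le one_pos hx
  rw [div_le_iff₀ hx0]
  have h1 := Real.add_one_le_exp (Real.log x + (-1))
  rw [Real.exp_add, Real.exp_log hx0] at h1
  nlinarith [Real.exp_pos (-1)]

noncomputable def auxf (k : ℕ) : ℝ := if 2 ≤ k then (k * Real.log 2) / 2 ^ k else 0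

noncomputable def auxB1 (n : ℕ) : ℝ := if n = 1 ∨ n = 2 ∨ n = 3 then Real.exp (-1) else 0

noncomputable def auxB2 (n : ℕ) : ℝ := if 4 ≤ n then ((n / 2 : ℕ) * Real.log 2) / 2 ^ (n / 2) else 0

lemma auxf_eq : auxf = fun k : ℕ =>
    (k : ℝ) * (1 / 2 : ℝ) ^ k * Real.log 2 - (if k = 1 then Real.log 2 / 2 else 0) := by
  funext k
  match k with
  | 0 => simp [auxf]
  | 1 => simp only [auxf]; norm_num; ring
  | (k + 2) =>
    simp only [auxf, if_pos (by omega : 2 ≤ k + 2), if_neg (by omega : ¬ k + 2 = 1)]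
    rw [div_pow, one_pow]
    push_cast
    ring

lemma summable_g : Summable (fun k : ℕ => (k : ℝ) * (1 / 2 : ℝ) ^ k * Real.log 2) := by
  apply Summable.mul_right
  exact (hasSum_coe_mul_geometric_of_norm_lt_one (by norm_num [Real.norm_eq_abs, abs_lt])).summable

lemma summable_h : Summable (fun k : ℕ => if k = 1 then Real.log 2 / 2 else 0) := by
  apply summable_of_ne_finset_zero (s := {1})
  intro b hb
  simp at hb
  simp [hb]

lemma summable_auxf : Summable auxf := by
  rw [auxf_eq]; exact summable_g.sub summable_h

lemma tsum_auxf : ∑' k, auxf k = 3 / 2 * Real.log 2 := by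
  rw [auxf_eq, Summable.tsum_sub summable_g summable_h]
  have h1 : ∑' k : ℕ, (k : ℝ) * (1 / 2 : ℝ) ^ k * Real.log 2
      = (∑' k : ℕ, (k : ℝ) * (1 / 2 : ℝ) ^ k) * Real.log 2 := tsum_mul_right
  have h2 : ∑' k : ℕ, (k : ℝ) * (1 / 2 : ℝ) ^ k = (1/2) / (1 - 1/2) ^ 2 :=
    tsum_coe_mul_geometric_of_norm_lt_one (by norm_num [Real.norm_eq_abs, abs_lt])
  have h3 : ∑' k : ℕ, (if k = 1 then Real.log 2 / 2 else 0) = Real.log 2 / 2 := by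
    rw [tsum_eq_single 1 (by intro b hb; simp [hb])]; simp
  rw [h1, h2, h3]
  ring

lemma auxB2_even (k : ℕ) : auxB2 (2 * k) = auxf k := by
  have h1 : 2 * k / 2 = k := by omega
  have h2 : (4 ≤ 2 * k) = (2 ≤ k) := by simp only [eq_iff_iff]; omega
  simp only [auxB2, auxf, h1, h2]

lemma auxB2_odd (k : ℕ) : auxB2 (2 * k + 1) = auxf k := by
  have h1 : (2 * k + 1) / 2 = k := by omega
  have h2 : (4 ≤ 2 * k + 1) = (2 ≤ k) := by simp only [eq_iff_iff]; omega
  simp only [auxB2, auxf, h1, h2]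

lemma summable_auxB2 : Summable auxB2 := by
  apply Summable.even_add_odd
  · simpa only [auxB2_even] using summable_auxf
  · simpa only [auxB2_odd] using summable_auxf

lemma tsum_auxB2 : ∑' n, auxB2 n = 3 * Real.log 2 := by
  have := tsum_even_add_odd (f := auxB2)
    (by simpa only [auxB2_even] using summable_auxf)
    (by simpa only [auxB2_odd] using summable_auxf)
  simp only [auxB2_even, auxB2_odd, tsum_auxf] at this
  linarith

lemma summable_auxB1 : Summable auxB1 := by
  apply summable_of_ne_finset_zero (s := ({1, 2, 3} : Finset ℕ))
  intro b hb
  simp only [Finset.mem_insert, Finset.mem_singleton] at hb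
  simp only [auxB1, if_neg (by tauto)]

lemma tsum_auxB1 : ∑' n, auxB1 n = 3 * Real.exp (-1) := by
  rw [tsum_eq_sum (s := ({1, 2, 3} : Finset ℕ))
    (by intro b hb; simp only [Finset.mem_insert, Finset.mem_singleton] at hb
        simp only [auxB1, if_neg (by tauto)])]
  norm_num [auxB1]
  ring

theorem stmt5 (ω : ℝ) (hirr : Irrational ω) (hmem : ω ∈ Set.Ico (0 : ℝ) 1) :
    Summable (fun n : ℕ => Real.log (cfDen ω n) / cfDen ω n) ∧
    (∑' n : ℕ, Real.log (cfDen ω n) / cfDen ω n) ≤ 3 * (Real.exp (-1) + Real.log 2) := by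
  have hterm : ¬(GenContFract.of ω).Terminates := by
    intro ht
    obtain ⟨q, hq⟩ := (GenContFract.terminates_iff_rat ω).mp ht
    exact hirr ⟨q, hq.symm⟩
  have hfib : ∀ n : ℕ, (Nat.fib (n + 1) : ℝ) ≤ cfDen ω n := by
    intro n
    exact GenContFract.succ_nth_fib_le_of_nth_den (Or.inr (fun h => hterm ⟨n - 1, h⟩))
  have hQ1 : ∀ n : ℕ, (1 : ℝ) ≤ cfDen ω n := by
    intro n
    refine le_trans ?_ (hfib n)
    exact_mod_cast Nat.fib_pos.mpr (Nat.succ_pos n)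
  have hQpow : ∀ n : ℕ, (2 : ℝ) ^ (n / 2) ≤ cfDen ω n := by
    intro n
    refine le_trans ?_ (hfib n)
    exact_mod_cast pow_half_le_fib n
  have hbound : ∀ n : ℕ, Real.log (cfDen ω n) / cfDen ω n ≤ auxB1 n + auxB2 n := by
    intro n
    rcases Nat.lt_or_ge n 4 with h4 | h4
    · rcases Nat.eq_zero_or_pos n with h0 | h0
      · subst h0
        have : cfDen ω 0 = 1 := GenContFract.zeroth_den_eq_one
        simp [this, auxB1, auxB2]
      · have hB1 : auxB1 n = Real.exp (-1) := by
          simp only [auxB1, if_pos (by omega : n = 1 ∨ n = 2 ∨ n = 3)]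
        have hB2 : auxB2 n = 0 := by simp only [auxB2, if_neg (by omega : ¬ 4 ≤ n)]
        rw [hB1, hB2, add_zero]
        exact log_div_self_le (hQ1 n)
    · have hk : 2 ≤ n / 2 := by omega
      have hB1 : auxB1 n = 0 := by simp only [auxB1, if_neg (by omega : ¬(n = 1 ∨ n = 2 ∨ n = 3))]
      have hB2 : auxB2 n = ((n / 2 : ℕ) * Real.log 2) / 2 ^ (n / 2) := by
        simp only [auxB2, if_pos h4]
      have hc : Real.exp 1 ≤ (2 : ℝ) ^ (n / 2) := by
        have h1 : Real.exp 1 < 2.7182818286 := Real.exp_one_lt_d9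
        have h2 : ((2 : ℝ) ^ 2 : ℝ) ≤ 2 ^ (n / 2) := pow_le_pow_right₀ one_le_two hk
        nlinarith
      have hanti := Real.log_div_self_antitoneOn
        (Set.mem_setOf.mpr hc) (Set.mem_setOf.mpr (le_trans hc (hQpow n))) (hQpow n)
      rw [hB1, hB2, zero_add]
      calc Real.log (cfDen ω n) / cfDen ω n ≤ Real.log ((2:ℝ) ^ (n/2)) / (2:ℝ) ^ (n/2) := hanti
        _ = ((n / 2 : ℕ) * Real.log 2) / 2 ^ (n / 2) := by rw [Real.log_pow]
  have hnonneg : ∀ n : ℕ, 0 ≤ Real.log (cfDen ω n) / cfDen ω n := by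
    intro n
    exact div_nonneg (Real.log_nonneg (hQ1 n)) (le_trans zero_le_one (hQ1 n))
  have hsumB : Summable (fun n => auxB1 n + auxB2 n) := summable_auxB1.add summable_auxB2
  have hsumf : Summable (fun n : ℕ => Real.log (cfDen ω n) / cfDen ω n) :=
    Summable.of_nonneg_of_le hnonneg hbound hsumB
  refine ⟨hsumf, ?_⟩
  have hle := Summable.tsum_le_tsum hbound hsumf hsumB
  have htsumB : ∑' n, (auxB1 n + auxB2 n) = 3 * Real.exp (-1) + 3 * Real.log 2 := by
    rw [Summable.tsum_add summable_auxB1 summable_auxB2, tsum_auxB1, tsum_auxB2]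
  rw [htsumB] at hle
  linarith
end
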